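/- Let n ≥ 1, ν > 0, and let f : ℍⁿ → ℝ be continuous, positive, attaining its maximum at the origin, with α := lim_{|ζ|_H→∞} |ζ|_H^ν f(ζ) existing and positive, β := α^{2/ν} f(0)^{−2/ν}, and such that for every ξ ∈ ℍⁿ there exists λ(ξ) > 0 with (λ(ξ)/d_H(ξ,ζ))^ν · f(Φ_{ξ,λ(ξ)}^β(ζ)) = f(ζ) for all ζ ≠ ξ. Then for each k = 1,…,n and each z ∈ ℂⁿ with z_k = x_k + i y_k, the partial derivatives of f(·,0) in x_k and y_k exist at (z,0) and satisfy ∂f/∂x_k (z,0) = −ν · α^{−2/ν} · x_k · f(z,0)^{1+2/ν} and ∂f/∂y_k (z,0) = −ν · α^{−2/ν} · y_k · f(z,0)^{1+2/ν}. -/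

import Mathlib

open Complex Filter Topology MeasureTheory

noncomputable section

/-- The Heisenberg group ℍⁿ as ℂⁿ × ℝ. -/
abbrev Heis (n : ℕ) := (Fin n → ℂ) × ℝ

namespace Heis

variable {n : ℕ}

/-- Hermitian inner product ⟨z,z'⟩ = Σ_j z_j conj(z'_j). -/
def hermInner (z w : Fin n → ℂ) : ℂ := ∑ j, z j * (starRingEnd ℂ) (w j)

/-- Squared Euclidean norm |z|² = Σ_j |z_j|². -/
def nsq (z : Fin n → ℂ) : ℝ := ∑ j, Complex.normSq (z j)

/-- Group law (z,t)·(z',t') = (z+z', t+t'+2 Im⟨z,z'⟩). -/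
def hmul (a b : Heis n) : Heis n :=
  (a.1 + b.1, a.2 + b.2 + 2 * (hermInner a.1 b.1).im)

/-- Group inverse: ζ⁻¹ = −ζ. -/
def hinv (a : Heis n) : Heis n := (-a.1, -a.2)

/-- Korányi norm |(z,t)|_H = (|z|⁴ + t²)^{1/4}. -/
def korNorm (a : Heis n) : ℝ := ((nsq a.1) ^ 2 + a.2 ^ 2) ^ ((1 : ℝ)/4)

/-- Korányi distance d_H(ξ,ζ) = |ζ⁻¹·ξ|_H. -/
def dH (a b : Heis n) : ℝ := korNorm (hmul (hinv b) a)

/-- Open Korányi ball B_λ(ξ). -/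
def ball (ξ : Heis n) (lam : ℝ) : Set (Heis n) := {ζ | dH ξ ζ < lam}

/-- Left translation τ_ξ. -/
def tau (ξ ζ : Heis n) : Heis n := hmul ξ ζ

/-- Dilation δ_λ(z,t) = (λz, λ²t). -/
def dil (lam : ℝ) (a : Heis n) : Heis n := (fun j => (lam : ℂ) * a.1 j, lam ^ 2 * a.2)

/-- Rotation ρ_M(z,t) = (Mz,t). -/
def rot (M : Matrix (Fin n) (Fin n) ℂ) (a : Heis n) : Heis n := (M.mulVec a.1, a.2)

/-- Inversion ι(z,t) = (conj z, −t). -/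
def iota (a : Heis n) : Heis n := (fun j => (starRingEnd ℂ) (a.1 j), -a.2)

/-- w = t + i|z|². -/
def wC (a : Heis n) : ℂ := (a.2 : ℂ) + Complex.I * ((nsq a.1 : ℝ) : ℂ)

/-- CR inversion 𝒥(z,t) = (z/w, −t/|w|²). -/
def crInv (a : Heis n) : Heis n :=
  (fun j => a.1 j / wC a, -a.2 / Complex.normSq (wC a))

/-- Angles θ_k for the rotation matrix M_{ξ,β}. -/
def theta (ξ : Heis n) (β : ℝ) (k : Fin n) : ℝ :=
  if ξ.1 k ≠ 0 then 2 * (ξ.1 k).arg + (wC ξ + Complex.I * (β : ℂ)).arg else 0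

/-- The unitary diagonal matrix M_{ξ,β} = diag(e^{iθ₁},…,e^{iθₙ}). -/
def Mmat (ξ : Heis n) (β : ℝ) : Matrix (Fin n) (Fin n) ℂ :=
  Matrix.diagonal fun k => Complex.exp (Complex.I * ((theta ξ β k : ℝ) : ℂ))

/-- Generalized CR inversion Φ_{ξ,λ}^β = τ_ξ ∘ ρ_{M_{ξ,β}} ∘ δ_{λ²} ∘ 𝒥 ∘ ι ∘ τ_ξ⁻¹. -/
def Phi (ξ : Heis n) (lam β : ℝ) (ζ : Heis n) : Heis n :=
  tau ξ (rot (Mmat ξ β) (dil (lam ^ 2) (crInv (iota (hmul (hinv ξ) ζ)))))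

/-- Direction of the vector field X_j at p. -/
def XVec (j : Fin n) (p : Heis n) : Heis n := (Pi.single j (1 : ℂ), 2 * (p.1 j).im)

/-- Direction of the vector field Y_j at p. -/
def YVec (j : Fin n) (p : Heis n) : Heis n := (Pi.single j Complex.I, -2 * (p.1 j).re)

/-- The vector field X_j acting on functions. -/
def Xop (j : Fin n) (u : Heis n → ℝ) (p : Heis n) : ℝ := fderiv ℝ u p (XVec j p)

/-- The vector field Y_j acting on functions. -/
def Yop (j : Fin n) (u : Heis n → ℝ) (p : Heis n) : ℝ := fderiv ℝ u p (YVec j p)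

/-- Sub-Laplacian Δ_H = Σ_j (X_j² + Y_j²). -/
def subLap (u : Heis n → ℝ) (p : Heis n) : ℝ :=
  ∑ j, (Xop j (Xop j u) p + Yop j (Yop j u) p)

/-- Squared length of the horizontal gradient |∇_H u|² = Σ_j ((X_j u)² + (Y_j u)²). -/
def gradHSq (u : Heis n → ℝ) (p : Heis n) : ℝ :=
  ∑ j, ((Xop j u p) ^ 2 + (Yop j u p) ^ 2)

/-- Generalized Kelvin transform u_{ξ,λ}^β(η) = (λ/d_H(η,ξ))^{Q−2} u(Φ_{ξ,λ}^β(η)), Q−2 = 2n. -/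
def kelvin (u : Heis n → ℝ) (ξ : Heis n) (lam β : ℝ) (η : Heis n) : ℝ :=
  (lam / dH η ξ) ^ (2 * n) * u (Phi ξ lam β η)

/-- The filter |ζ|_H → ∞ on ℍⁿ. -/
def atInftyH (n : ℕ) : Filter (Heis n) := Filter.comap korNorm Filter.atTop

end Heis

/-!
Write `wC (z,t) = t + i|z|²`, so that `|ζ|_H⁴ = |wC ζ|²`. Testing the symmetry at `ξ` on the
vertical line `ξ·(0,r)`, which `Φ_ξ` maps to `ξ·(0,λ⁴/r) → ξ`, and letting `r → ∞` gives
`λ(ξ)^ν f(ξ) = α`. At `ξ = 0`, together with `f ≤ f(0)`, this is the decay bound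
`f(ζ) ≤ α |ζ|_H^{-ν}`.

For `ξ = (z,0)` the angles of `M_{ξ,β}` make `wC (Φ_ξ(ξ·a)) · conj (wC a)` an explicit
polynomial `P(a)` in `a` (`phiNumerator`), with `P(0) = λ⁴`. The symmetry at `ξ` followed by the
decay bound at `Φ_ξ(ξ·a)` gives `f(ξ·a) ≤ f(ξ) (λ⁸/|P(a)|²)^{ν/4}`, with equality at `a = 0`.
So on a horizontal line, `F(s) = f(z + s w, 0)` is touched from above at every point by a
function whose derivative there is `φ(s) = -ν α^{-2/ν} Re⟨z + s w, w⟩ F(s)^{1+2/ν}`, which is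
continuous in `s`. Comparing Dini derivatives of `F` and of `F(-·)` with `φ` gives
`F(b) - F(a) = ∫ₐᵇ φ`, hence `F' = φ`.
-/

lemma update_add_mul_eq_add_smul_single {ι R : Type*} [DecidableEq ι] [Semiring R] (z : ι → R)
    (k : ι) (s c : R) : Function.update z k (z k + s * c) = z + s • Pi.single k c := by
  ext j
  rcases eq_or_ne j k with rfl | hj <;> simp [*]

lemma hasDerivAt_normSq_quadratic (L : ℝ) (b c : ℂ) :
    HasDerivAt (fun s : ℝ => normSq ((L : ℂ) + s * b + s ^ 2 * c)) (2 * L * b.re) 0 := by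
  have hs : HasDerivAt (fun s : ℝ => (s : ℂ)) 1 0 := (hasDerivAt_id (0 : ℝ)).ofReal_comp
  have hg := ((hs.mul_const b).const_add (L : ℂ)).add ((hs.pow 2).mul_const c)
  simp only [normSq_eq_norm_sq]
  convert hg.norm_sq using 1
  · rfl
  · rw [Complex.inner]
    simp; ring

lemma div_sq_eq_rpow_mul_rpow {ν lam c α : ℝ} (hν : ν ≠ 0) (hlam : 0 < lam) (hc : 0 < c)
    (h : lam ^ ν * c = α) : c / lam ^ 2 = α ^ (-(2 / ν)) * c ^ (1 + 2 / ν) := by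
  rw [← h, Real.mul_rpow (by positivity) hc.le, ← Real.rpow_mul hlam.le, Real.rpow_add hc,
    Real.rpow_one, Real.rpow_neg hc.le, mul_neg, mul_div_cancel₀ _ hν, Real.rpow_neg hlam.le]
  have : 0 < c ^ (2 / ν) := Real.rpow_pos_of_pos hc _
  norm_num
  field_simp

section TouchingAbove

variable {F φ : ℝ → ℝ}

lemma eventually_slope_lt_of_touching_above {ψ : ℝ → ℝ} {x d r : ℝ} (hψ : HasDerivAt ψ d x)
    (hψx : ψ x = F x) (hle : F ≤ᶠ[𝓝 x] ψ) (hr : d < r) :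
    ∀ᶠ y in 𝓝[>] x, slope F x y < r := by
  have hψslope : ∀ᶠ y in 𝓝[>] x, slope ψ x y < r :=
    nhdsWithin_mono x (fun y hy => ne_of_gt hy)
      ((hasDerivAt_iff_tendsto_slope.mp hψ).eventually_lt_const hr)
  filter_upwards [hψslope, nhdsWithin_le_nhds hle, self_mem_nhdsWithin] with y hslope hy hxy
  refine lt_of_le_of_lt ?_ hslope
  rw [slope_def_field, slope_def_field, hψx]
  exact div_le_div_of_nonneg_right (by linarith) (sub_pos.mpr hxy).le

lemma sub_le_integral_of_touching_above (hF : Continuous F) (hφ : Continuous φ)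
    (H : ∀ x, ∃ ψ : ℝ → ℝ, HasDerivAt ψ (φ x) x ∧ ψ x = F x ∧ F ≤ᶠ[𝓝 x] ψ)
    {a b : ℝ} (hab : a ≤ b) : F b - F a ≤ ∫ t in a..b, φ t := by
  have hB : ∀ x, HasDerivAt (fun u => (∫ t in a..u, φ t) + F a) (φ x) x := fun x =>
    (hφ.integral_hasStrictDerivAt a x).hasDerivAt.add_const (F a)
  have := image_le_of_liminf_slope_right_le_deriv_boundary hF.continuousOn (by simp)
    (fun x _ => (hB x).continuousAt.continuousWithinAt) (fun x _ => (hB x).hasDerivWithinAt)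
    (fun x _ r hr => by
      obtain ⟨ψ, hψ, hψx, hle⟩ := H x
      exact (eventually_slope_lt_of_touching_above hψ hψx hle hr).frequently)
    (Set.right_mem_Icc.mpr hab)
  linarith

lemma hasDerivAt_of_touching_above (hF : Continuous F) (hφ : Continuous φ)
    (H : ∀ x, ∃ ψ : ℝ → ℝ, HasDerivAt ψ (φ x) x ∧ ψ x = F x ∧ F ≤ᶠ[𝓝 x] ψ) (x : ℝ) :
    HasDerivAt F (φ x) x := by
  have Hneg : ∀ y, ∃ ψ : ℝ → ℝ, HasDerivAt ψ (-φ (-y)) y ∧ ψ y = F (-y) ∧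
      (fun u => F (-u)) ≤ᶠ[𝓝 y] ψ := fun y => by
    obtain ⟨ψ, hψ, hψy, hle⟩ := H (-y)
    have hψneg := hψ.comp y (hasDerivAt_neg y)
    rw [mul_neg_one] at hψneg
    exact ⟨fun u => ψ (-u), hψneg, hψy, (continuous_neg.tendsto y).eventually hle⟩
  have hFTC : ∀ a b, a ≤ b → F b - F a = ∫ t in a..b, φ t := fun a b hab => by
    have hle := sub_le_integral_of_touching_above hF hφ H hab
    have hge := sub_le_integral_of_touching_above (hF.comp continuous_neg)
      (hφ.comp continuous_neg).neg Hneg (neg_le_neg hab)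
    rw [← intervalIntegral.integral_comp_neg] at hge
    simp only [Function.comp_apply, neg_neg, Pi.neg_apply, intervalIntegral.integral_neg] at hge
    linarith
  have hF_eq : F = fun y => F x + ∫ t in x..y, φ t := funext fun y => by
    rcases le_total x y with h | h
    · linarith [hFTC x y h]
    · rw [intervalIntegral.integral_symm]; linarith [hFTC y x h]
  rw [hF_eq]
  exact (hφ.integral_hasStrictDerivAt x x).hasDerivAt.const_add (F x)

end TouchingAbove

namespace Heis

open ComplexConjugate

variable {n : ℕ}

lemma hermInner_swap (z w : Fin n → ℂ) : hermInner w z = conj (hermInner z w) := by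
  simp [hermInner, map_sum, mul_comm]

lemma hermInner_self_im (z : Fin n → ℂ) : (hermInner z z).im = 0 := by
  simp [hermInner, Complex.mul_conj]

lemma hermInner_ofReal_smul_right (z w : Fin n → ℂ) (s : ℝ) :
    hermInner z ((s : ℂ) • w) = s * hermInner z w := by
  simp [hermInner, Finset.mul_sum, mul_left_comm]

lemma hermInner_single_right (z : Fin n → ℂ) (k : Fin n) (c : ℂ) :
    hermInner z (Pi.single k c) = z k * conj c := by
  rw [hermInner, Finset.sum_eq_single k (fun j _ hj => by simp [hj]) (by simp)]
  simp

lemma nsq_add (z w : Fin n → ℂ) : nsq (z + w) = nsq z + nsq w + 2 * (hermInner z w).re := by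
  simp only [nsq, hermInner, Pi.add_apply, normSq_add, Finset.sum_add_distrib, re_sum,
    Finset.mul_sum]

lemma nsq_const_mul (c : ℂ) (z : Fin n → ℂ) : nsq (fun j => c * z j) = normSq c * nsq z := by
  simp [nsq, Finset.mul_sum]

lemma nsq_ofReal_smul (s : ℝ) (w : Fin n → ℂ) : nsq ((s : ℂ) • w) = s ^ 2 * nsq w := by
  simp [nsq, Finset.mul_sum, sq]

lemma hmul_zero_left (a : Heis n) : hmul 0 a = a := by
  simp [hmul, hermInner]

lemma hmul_zero_right (a : Heis n) : hmul a 0 = a := by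
  simp [hmul, hermInner]

lemma hmul_zero_fst (ξ : Heis n) (r : ℝ) : hmul ξ (0, r) = (ξ.1, ξ.2 + r) := by
  simp [hmul, hermInner]

lemma hinv_hmul_cancel_left (a b : Heis n) : hmul (hinv a) (hmul a b) = b := by
  ext j
  · simp [hmul, hinv]
  · simp only [hmul, hinv]
    have h : hermInner (-a.1) (a.1 + b.1) = -hermInner a.1 a.1 - hermInner a.1 b.1 := by
      simp [hermInner, mul_add, Finset.sum_add_distrib]; ring
    rw [h, sub_im, neg_im, hermInner_self_im]
    ring

lemma hinv_hmul_self (a : Heis n) : hmul (hinv a) a = 0 := by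
  simpa [hmul_zero_right] using hinv_hmul_cancel_left a 0

lemma hmul_hinv_hmul_self (a b : Heis n) : hmul (hinv (hmul a b)) a = hinv b := by
  ext j
  · simp [hmul, hinv]
  · simp only [hmul, hinv]
    have h : hermInner (-(a.1 + b.1)) a.1 = -hermInner a.1 a.1 - hermInner b.1 a.1 := by
      simp [hermInner, add_mul, Finset.sum_add_distrib]; ring
    rw [h, sub_im, neg_im, hermInner_self_im, hermInner_swap a.1 b.1, conj_im]
    ring

lemma normSq_wC (a : Heis n) : normSq (wC a) = nsq a.1 ^ 2 + a.2 ^ 2 := by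
  simp [wC, normSq_apply]; ring

lemma wC_eq_zero_iff {a : Heis n} : wC a = 0 ↔ a = 0 := by
  refine ⟨fun h => ?_, fun h => by simp [h, wC, nsq]⟩
  have hre : a.2 = 0 := by simpa [wC] using congrArg re h
  have him : nsq a.1 = 0 := by simpa [wC] using congrArg im h
  have hz : a.1 = 0 := funext fun j => normSq_eq_zero.mp <|
    (Finset.sum_eq_zero_iff_of_nonneg fun j _ => normSq_nonneg (a.1 j)).mp him j
      (Finset.mem_univ j)
  exact Prod.ext hz hre

lemma korNorm_rpow (a : Heis n) (ν : ℝ) : korNorm a ^ ν = normSq (wC a) ^ (ν / 4) := by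
  rw [korNorm, normSq_wC, ← Real.rpow_mul (by positivity)]
  ring_nf

lemma korNorm_nonneg (a : Heis n) : 0 ≤ korNorm a :=
  Real.rpow_nonneg (by positivity) _

lemma korNorm_hinv (a : Heis n) : korNorm (hinv a) = korNorm a := by
  simp [korNorm, hinv, nsq]

lemma dH_hmul_right (ξ a : Heis n) : dH ξ (hmul ξ a) = korNorm a := by
  rw [dH, hmul_hinv_hmul_self, korNorm_hinv]

lemma dH_zero_left (ζ : Heis n) : dH 0 ζ = korNorm ζ := by
  simpa [hmul_zero_left] using dH_hmul_right (0 : Heis n) ζ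

lemma wC_hmul (a b : Heis n) : wC (hmul a b) = wC a + wC b + 2 * I * hermInner b.1 a.1 := by
  apply Complex.ext <;> simp [wC, hmul, nsq_add, hermInner_swap a.1 b.1]

lemma wC_iota (a : Heis n) : wC (iota a) = -conj (wC a) := by
  apply Complex.ext <;> simp [wC, iota, nsq]

lemma wC_crInv (a : Heis n) : wC (crInv a) = -(wC a)⁻¹ := by
  have hnsq : nsq (crInv a).1 = nsq a.1 / normSq (wC a) := by
    simp [crInv, nsq, Finset.sum_div]
  have hre : a.2 = (wC a).re := by simp [wC]
  have him : nsq a.1 = (wC a).im := by simp [wC]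
  have h : wC (crInv a) = ((-(wC a).re / normSq (wC a) : ℝ) : ℂ) +
      I * (((wC a).im / normSq (wC a) : ℝ) : ℂ) := by
    rw [wC, hnsq, ← him]; simp [crInv, ← hre]
  rw [h, inv_def]
  apply Complex.ext <;> simp <;> ring

lemma wC_dil (r : ℝ) (a : Heis n) : wC (dil r a) = (r : ℂ) ^ 2 * wC a := by
  simp only [wC, dil, nsq_const_mul, normSq_ofReal]; push_cast; ring

lemma wC_rot_Mmat (ξ : Heis n) (β : ℝ) (a : Heis n) : wC (rot (Mmat ξ β) a) = wC a := by
  have h : ∀ θ : ℝ, normSq (exp (I * θ)) = 1 := fun θ => by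
    rw [normSq_eq_norm_sq, mul_comm, norm_exp_ofReal_mul_I]; norm_num
  simp [wC, rot, Mmat, Matrix.mulVec_diagonal, nsq, h]

lemma Phi_hmul (ξ : Heis n) (lam β : ℝ) (a : Heis n) :
    Phi ξ lam β (hmul ξ a) = hmul ξ (rot (Mmat ξ β) (dil (lam ^ 2) (crInv (iota a)))) := by
  rw [Phi, tau, hinv_hmul_cancel_left]

lemma Phi_hmul_vertical (ξ : Heis n) (lam β r : ℝ) :
    Phi ξ lam β (hmul ξ (0, r)) = hmul ξ (0, lam ^ 4 / r) := by
  rw [Phi_hmul]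
  congr 1
  rcases eq_or_ne r 0 with rfl | hr
  · simp [rot, dil, crInv, iota, wC, nsq, ← Pi.zero_def]
  · simp [rot, dil, crInv, iota, wC, nsq, ← Pi.zero_def]
    field_simp

lemma exp_theta_mul_conj {β : ℝ} (hβ : 0 < β) (z : Fin n → ℂ) (k : Fin n) :
    exp (I * theta ((z, 0) : Heis n) β k) * conj (z k) = I * z k := by
  by_cases hz : z k = 0
  · simp [hz]
  have hβarg : (wC ((z, 0) : Heis n) + I * β).arg = Real.pi / 2 := by
    have hpos : 0 < nsq z + β := by
      have : 0 ≤ nsq z := Finset.sum_nonneg fun j _ => normSq_nonneg _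
      linarith
    have : wC ((z, 0) : Heis n) + I * β = ((nsq z + β : ℝ) : ℂ) * I := by
      simp [wC]; ring
    rw [this, arg_real_mul _ hpos, arg_I]
  have hθ : theta ((z, 0) : Heis n) β k = 2 * (z k).arg + Real.pi / 2 := by
    simp [theta, hz, hβarg]
  have hpolar := norm_mul_exp_arg_mul_I (z k)
  set θ := (z k).arg
  set r := ‖z k‖
  rw [hθ, ← hpolar, map_mul, conj_ofReal, ← exp_conj]
  simp only [map_mul, conj_ofReal, conj_I]
  calc _ = (r : ℂ) * exp (I * ↑(2 * θ + Real.pi / 2) + ↑θ * -I) := by rw [exp_add]; ring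
    _ = r * (exp (Real.pi / 2 * I) * exp (θ * I)) := by
        rw [← exp_add]; push_cast; ring_nf
    _ = _ := by rw [exp_pi_div_two_mul_I]; ring

def phiNumerator (z : Fin n → ℂ) (lam : ℝ) (a : Heis n) : ℂ :=
  (lam : ℂ) ^ 4 + 2 * (lam : ℂ) ^ 2 * hermInner z a.1 + I * nsq z * conj (wC a)

lemma crInv_iota_fst (a : Heis n) (j : Fin n) :
    (crInv (iota a)).1 j = -conj (a.1 j) / conj (wC a) := by
  simp only [crInv, wC_iota]
  simp [iota, neg_div, div_neg]

lemma wC_Phi_hmul {β : ℝ} (hβ : 0 < β) (z : Fin n → ℂ) (lam : ℝ) {a : Heis n} (ha : wC a ≠ 0) :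
    wC (Phi (z, 0) lam β (hmul (z, 0) a)) = phiNumerator z lam a / conj (wC a) := by
  have hc : conj (wC a) ≠ 0 := by simpa using ha
  set K := rot (Mmat (z, 0) β) (dil (lam ^ 2) (crInv (iota a)))
  have hK : wC K = lam ^ 4 / conj (wC a) := by
    simp only [K, wC_rot_Mmat, wC_dil, wC_crInv, wC_iota]; push_cast; field_simp
  have hKz : hermInner K.1 z = -I * lam ^ 2 * hermInner z a.1 / conj (wC a) := by
    simp only [hermInner, K, rot, Mmat, Matrix.mulVec_diagonal, dil, crInv_iota_fst,
      Finset.mul_sum, Finset.sum_div]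
    refine Finset.sum_congr rfl fun j _ => ?_
    have := exp_theta_mul_conj hβ z j
    field_simp
    push_cast
    linear_combination (-(lam : ℂ) ^ 2 * conj (a.1 j)) * this
  have hz : wC ((z, 0) : Heis n) = I * nsq z := by simp [wC]
  rw [Phi_hmul, wC_hmul, hK, hKz, hz, phiNumerator]
  field_simp
  linear_combination (-2 * (lam : ℂ) ^ 2 * hermInner z a.1) * I_sq

lemma hmul_line (z w : Fin n → ℂ) (s : ℝ) :
    hmul ((z, 0) : Heis n) ((s : ℂ) • w, -2 * s * (hermInner z w).im) = (z + (s : ℂ) • w, 0) := by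
  ext
  · simp [hmul]
  · simp only [hmul, hermInner_ofReal_smul_right, im_ofReal_mul]
    ring

lemma phiNumerator_line (z w : Fin n → ℂ) (lam s : ℝ) :
    phiNumerator z lam ((s : ℂ) • w, -2 * s * (hermInner z w).im) = (lam ^ 4 : ℝ) +
      s * (2 * lam ^ 2 * hermInner z w - 2 * I * nsq z * (hermInner z w).im) +
      s ^ 2 * (nsq z * nsq w) := by
  have hw : conj (wC ((s : ℂ) • w, -2 * s * (hermInner z w).im)) =
      -2 * s * (hermInner z w).im - I * (s ^ 2 * nsq w) := by
    simp only [wC, nsq_ofReal_smul]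
    apply Complex.ext <;> simp
  rw [phiNumerator, hw, hermInner_ofReal_smul_right]
  push_cast
  linear_combination (-(s : ℂ) ^ 2 * nsq z * nsq w) * I_sq

def InversionSymmetric (f : Heis n → ℝ) (ν β : ℝ) (ξ : Heis n) (lam : ℝ) : Prop :=
  ∀ ζ : Heis n, ζ ≠ ξ → (lam / dH ξ ζ) ^ ν * f (Phi ξ lam β ζ) = f ζ

variable {f : Heis n → ℝ} {ν α β lam : ℝ}

lemma tendsto_hmul_vertical_atInftyH (ξ : Heis n) :
    Tendsto (fun r : ℝ => hmul ξ (0, r)) atTop (atInftyH n) := by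
  refine tendsto_comap_iff.mpr ?_
  have hN : Tendsto (fun r : ℝ => nsq ξ.1 ^ 2 + (ξ.2 + r) ^ 2) atTop atTop :=
    tendsto_atTop_add_const_left _ _
      ((tendsto_pow_atTop two_ne_zero).comp (tendsto_atTop_add_const_left _ _ tendsto_id))
  exact ((tendsto_rpow_atTop (by norm_num : (0 : ℝ) < 1 / 4)).comp hN).congr
    fun r => by simp [korNorm, hmul_zero_fst]

lemma tendsto_normSq_wC_hmul_vertical_div_sq (ξ : Heis n) :
    Tendsto (fun r : ℝ => normSq (wC (hmul ξ (0, r))) / r ^ 2) atTop (𝓝 1) := by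
  have h : Tendsto (fun r : ℝ => nsq ξ.1 ^ 2 * r⁻¹ ^ 2 + (ξ.2 * r⁻¹ + 1) ^ 2) atTop
      (𝓝 (nsq ξ.1 ^ 2 * 0 ^ 2 + (ξ.2 * 0 + 1) ^ 2)) := by
    have := tendsto_inv_atTop_zero (𝕜 := ℝ)
    exact (tendsto_const_nhds.mul (this.pow 2)).add
      (((tendsto_const_nhds.mul this).add tendsto_const_nhds).pow 2)
  rw [show nsq ξ.1 ^ 2 * 0 ^ 2 + (ξ.2 * 0 + 1) ^ 2 = 1 by ring] at h
  refine h.congr' ?_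
  filter_upwards [eventually_ne_atTop 0] with r hr
  rw [normSq_wC, hmul_zero_fst]
  field_simp

lemma InversionSymmetric.rpow_mul_eq (hcont : Continuous f)
    (hlim : Tendsto (fun ζ => korNorm ζ ^ ν * f ζ) (atInftyH n) (𝓝 α)) {ξ : Heis n}
    (hlam : 0 ≤ lam) (hξ : InversionSymmetric f ν β ξ lam) : lam ^ ν * f ξ = α := by
  have hPhi : Tendsto (fun r : ℝ => f (hmul ξ (0, lam ^ 4 / r))) atTop (𝓝 (f ξ)) := by
    have hcurve : Continuous fun s : ℝ => hmul ξ (0, s) := by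
      simp only [hmul_zero_fst]; fun_prop
    have := ((hcont.comp hcurve).tendsto 0).comp
      ((tendsto_const_nhds (x := lam ^ 4)).div_atTop tendsto_id)
    simpa [Function.comp_def, hmul_zero_fst] using this
  have hrhs := ((tendsto_normSq_wC_hmul_vertical_div_sq ξ).rpow_const (p := ν / 4)
    (Or.inl one_ne_zero)).mul ((tendsto_const_nhds (x := lam ^ ν)).mul hPhi)
  rw [Real.one_rpow, one_mul] at hrhs
  refine tendsto_nhds_unique (hrhs.congr' ?_) (hlim.comp (tendsto_hmul_vertical_atInftyH ξ))
  filter_upwards [eventually_gt_atTop 0] with r hr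
  have hne : hmul ξ (0, r) ≠ ξ := fun h => hr.ne' (by
    simpa [hmul_zero_fst] using congrArg Prod.snd h)
  have hsym := hξ _ hne
  rw [dH_hmul_right, Phi_hmul_vertical] at hsym
  have hr0 : normSq (wC ((0, r) : Heis n)) = r ^ 2 := by simp [normSq_wC, nsq]
  have : 0 < (r ^ 2) ^ (ν / 4) := by positivity
  rw [Function.comp_apply, ← hsym, korNorm_rpow, Real.div_rpow hlam (korNorm_nonneg _),
    korNorm_rpow, hr0, Real.div_rpow (normSq_nonneg _) (by positivity)]
  field_simp

lemma InversionSymmetric.le_div_korNorm_rpow (hmax : ∀ p, f p ≤ f 0) (hlam : 0 ≤ lam)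
    (h0 : InversionSymmetric f ν β 0 lam) (hA : lam ^ ν * f 0 = α) {ζ : Heis n} (hζ : ζ ≠ 0) :
    f ζ ≤ α / korNorm ζ ^ ν := by
  rw [← h0 ζ hζ, dH_zero_left, Real.div_rpow hlam (korNorm_nonneg _), ← hA, div_mul_eq_mul_div,
    mul_div_right_comm, mul_div_right_comm (lam ^ ν)]
  exact mul_le_mul_of_nonneg_left (hmax _) (div_nonneg (Real.rpow_nonneg hlam _)
    (Real.rpow_nonneg (korNorm_nonneg _) _))

lemma InversionSymmetric.le_mul_rpow_phiNumerator (hβ : 0 < β) {z : Fin n → ℂ} (hlam : 0 < lam)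
    (hξ : InversionSymmetric f ν β (z, 0) lam) (hA : lam ^ ν * f (z, 0) = α)
    (hdecay : ∀ ζ ≠ 0, f ζ ≤ α / korNorm ζ ^ ν) {a : Heis n} (hQ : phiNumerator z lam a ≠ 0) :
    f (hmul (z, 0) a) ≤ f (z, 0) * (lam ^ 8 / normSq (phiNumerator z lam a)) ^ (ν / 4) := by
  rcases eq_or_ne a 0 with rfl | ha
  · have : normSq (phiNumerator z lam 0) = lam ^ 8 := by
      simp [phiNumerator, hermInner, wC, nsq]; ring
    rw [this, div_self (by positivity), Real.one_rpow, mul_one, hmul_zero_right]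
  have hwa : wC a ≠ 0 := wC_eq_zero_iff.not.mpr ha
  set Φ := Phi (z, 0) lam β (hmul (z, 0) a)
  have hΦ : wC Φ * conj (wC a) = phiNumerator z lam a := by
    rw [wC_Phi_hmul hβ z lam hwa, div_mul_cancel₀ _ (by simpa using hwa)]
  have hΦ0 : Φ ≠ 0 := fun h => hQ (by rw [← hΦ, h]; simp [wC, nsq])
  have hne : hmul (z, 0) a ≠ (z, 0) := fun h => ha <| by
    simpa [hinv_hmul_cancel_left, hinv_hmul_self] using congrArg (hmul (hinv (z, 0))) h
  have hnormSq : normSq (phiNumerator z lam a) = normSq (wC Φ) * normSq (wC a) := by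
    rw [← hΦ, map_mul, normSq_conj]
  calc f (hmul (z, 0) a) = (lam / korNorm a) ^ ν * f Φ := by rw [← hξ _ hne, dH_hmul_right]
    _ ≤ (lam / korNorm a) ^ ν * (α / korNorm Φ ^ ν) :=
        mul_le_mul_of_nonneg_left (hdecay Φ hΦ0)
          (Real.rpow_nonneg (div_nonneg hlam.le (korNorm_nonneg a)) _)
    _ = f (z, 0) * (lam ^ 8 / normSq (phiNumerator z lam a)) ^ (ν / 4) := by
        have hl : lam ^ ν = (lam ^ 4) ^ (ν / 4) := by
          rw [← Real.rpow_natCast, ← Real.rpow_mul hlam.le]; ring_nf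
        have ha' : 0 < normSq (wC a) := normSq_pos.mpr hwa
        have hΦ' : 0 < normSq (wC Φ) := normSq_pos.mpr (wC_eq_zero_iff.not.mpr hΦ0)
        have := Real.rpow_pos_of_pos ha' (ν / 4)
        have := Real.rpow_pos_of_pos hΦ' (ν / 4)
        rw [hnormSq, ← hA, Real.div_rpow hlam.le (korNorm_nonneg _), korNorm_rpow, korNorm_rpow,
          show lam ^ 8 = lam ^ 4 * lam ^ 4 by ring, Real.div_rpow (by positivity)
          (mul_pos hΦ' ha').le, Real.mul_rpow (by positivity) (by positivity),
          Real.mul_rpow hΦ'.le ha'.le, hl]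
        field_simp

lemma InversionSymmetric.exists_touching_above_line (hν : ν ≠ 0) (hβ : 0 < β)
    {z : Fin n → ℂ} (hpos : 0 < f (z, 0)) (hlam : 0 < lam)
    (hξ : InversionSymmetric f ν β (z, 0) lam) (hA : lam ^ ν * f (z, 0) = α)
    (hdecay : ∀ ζ ≠ 0, f ζ ≤ α / korNorm ζ ^ ν) (w : Fin n → ℂ) :
    ∃ ψ : ℝ → ℝ,
      HasDerivAt ψ (-ν * α ^ (-(2 / ν)) * (hermInner z w).re * f (z, 0) ^ (1 + 2 / ν)) 0 ∧
      ψ 0 = f (z, 0) ∧ (fun s : ℝ => f (z + (s : ℂ) • w, 0)) ≤ᶠ[𝓝 0] ψ := by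
  set b : ℂ := 2 * lam ^ 2 * hermInner z w - 2 * I * nsq z * (hermInner z w).im
  set a : ℝ → Heis n := fun s => ((s : ℂ) • w, -2 * s * (hermInner z w).im)
  set ρ : ℝ → ℝ := fun s => normSq (phiNumerator z lam (a s))
  have hρ : HasDerivAt ρ (2 * lam ^ 4 * b.re) 0 := by
    simpa only [ρ, a, phiNumerator_line] using hasDerivAt_normSq_quadratic (lam ^ 4) b _
  have hρ0 : ρ 0 = lam ^ 8 := by simp only [ρ, a, phiNumerator_line]; simp; ring
  have hL : (lam ^ 8 : ℝ) ≠ 0 := by positivity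
  have hq : HasDerivAt (fun s => lam ^ 8 / ρ s)
      ((0 * ρ 0 - lam ^ 8 * (2 * lam ^ 4 * b.re)) / ρ 0 ^ 2) 0 :=
    (hasDerivAt_const (0 : ℝ) (lam ^ 8)).div hρ (hρ0.trans_ne hL)
  have hq0 : lam ^ 8 / ρ 0 = 1 := by rw [hρ0, div_self hL]
  refine ⟨fun s => f (z, 0) * (lam ^ 8 / ρ s) ^ (ν / 4), ?_, by simp only [hq0, Real.one_rpow,
    mul_one], ?_⟩
  · refine ((hq.rpow_const (p := ν / 4) (Or.inl (hq0.trans_ne one_ne_zero))).const_mul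
      (f (z, 0))).congr_deriv ?_
    have hb : b.re = 2 * lam ^ 2 * (hermInner z w).re := by simp [b, pow_two]
    rw [hq0, hρ0, Real.one_rpow, hb, show -ν * α ^ (-(2 / ν)) * (hermInner z w).re *
      f (z, 0) ^ (1 + 2 / ν) = -ν * (hermInner z w).re * (α ^ (-(2 / ν)) *
      f (z, 0) ^ (1 + 2 / ν)) by ring, ← div_sq_eq_rpow_mul_rpow hν hlam hpos hA]
    field_simp
    ring
  · filter_upwards [hρ.continuousAt.eventually_ne (hρ0.trans_ne hL)] with s hs
    rw [← hmul_line]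
    exact hξ.le_mul_rpow_phiNumerator hβ hlam hA hdecay fun h => hs (by
      simp only [ρ, a]; rw [h, map_zero])

theorem hasDerivAt_horizontal_line (hcont : Continuous f) (hpos : ∀ p, 0 < f p)
    (hmax : ∀ p, f p ≤ f 0) (hν : ν ≠ 0) (hβ : 0 < β)
    (hlim : Tendsto (fun ζ => korNorm ζ ^ ν * f ζ) (atInftyH n) (𝓝 α))
    (hsym : ∀ ξ : Heis n, ∃ lam : ℝ, 0 < lam ∧ InversionSymmetric f ν β ξ lam)
    (z w : Fin n → ℂ) (σ : ℝ) :
    HasDerivAt (fun s : ℝ => f (z + (s : ℂ) • w, 0)) (-ν * α ^ (-(2 / ν)) *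
      (hermInner (z + (σ : ℂ) • w) w).re * f (z + (σ : ℂ) • w, 0) ^ (1 + 2 / ν)) σ := by
  obtain ⟨lam0, hlam0, h0⟩ := hsym 0
  have hdecay : ∀ ζ ≠ 0, f ζ ≤ α / korNorm ζ ^ ν := fun ζ =>
    h0.le_div_korNorm_rpow hmax hlam0.le (h0.rpow_mul_eq hcont hlim hlam0.le)
  have hF : Continuous fun s : ℝ => f (z + (s : ℂ) • w, 0) := hcont.comp (by fun_prop)
  refine hasDerivAt_of_touching_above (φ := fun σ => -ν * α ^ (-(2 / ν)) *
    (hermInner (z + (σ : ℂ) • w) w).re * f (z + (σ : ℂ) • w, 0) ^ (1 + 2 / ν)) hF ?_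
    (fun σ => ?_) σ
  · have : Continuous fun s : ℝ => (hermInner (z + (s : ℂ) • w) w).re := by
      simp only [hermInner]; fun_prop
    exact (continuous_const.mul this).mul (hF.rpow_const fun _ => Or.inl (hpos _).ne')
  obtain ⟨lam, hlam, hξ⟩ := hsym (z + (σ : ℂ) • w, 0)
  obtain ⟨ψ, hψ, hψ0, hle⟩ := hξ.exists_touching_above_line hν hβ (hpos _) hlam
    (hξ.rpow_mul_eq hcont hlim hlam.le) hdecay w
  refine ⟨fun s => ψ (s - σ), HasDerivAt.comp_sub_const σ σ (by rwa [sub_self]),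
    by simpa using hψ0, ?_⟩
  filter_upwards [(continuous_sub_right σ).tendsto' σ 0 (sub_self σ) |>.eventually hle] with s hs
  rwa [add_assoc, ← add_smul, ← ofReal_add, add_sub_cancel] at hs

end Heis

open Heis
theorem xy_derivative_identities_general (n : ℕ) (ν : ℝ) (hν : 0 < ν)
    (f : Heis n → ℝ) (hcont : Continuous f) (hpos : ∀ p, 0 < f p)
    (hmax : ∀ p, f p ≤ f 0)
    (α : ℝ) (hα : 0 < α)
    (hlim : Tendsto (fun ζ => korNorm ζ ^ ν * f ζ) (atInftyH n) (nhds α))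
    (β : ℝ) (hβ : β = α ^ (2 / ν) * f 0 ^ (-(2 / ν)))
    (hsym : ∀ ξ : Heis n, ∃ lam : ℝ, 0 < lam ∧
      ∀ ζ : Heis n, ζ ≠ ξ → (lam / dH ξ ζ) ^ ν * f (Phi ξ lam β ζ) = f ζ) :
    ∀ (k : Fin n) (z : Fin n → ℂ),
      HasDerivAt (fun s : ℝ => f (Function.update z k (z k + (s : ℂ)), 0))
        (-ν * α ^ (-(2 / ν)) * (z k).re * f (z, 0) ^ (1 + 2 / ν)) 0 ∧
      HasDerivAt (fun s : ℝ => f (Function.update z k (z k + (s : ℂ) * Complex.I), 0))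
        (-ν * α ^ (-(2 / ν)) * (z k).im * f (z, 0) ^ (1 + 2 / ν)) 0 := by
  intro k z
  have hβ0 : 0 < β := hβ ▸ mul_pos (Real.rpow_pos_of_pos hα _) (Real.rpow_pos_of_pos (hpos 0) _)
  have hline := fun c : ℂ => hasDerivAt_horizontal_line hcont hpos hmax hν.ne' hβ0 hlim hsym z
    (Pi.single k c) 0
  constructor
  · convert hline 1 using 1
    · funext s; rw [← update_add_mul_eq_add_smul_single, mul_one]
    · simp [hermInner_single_right]
  · convert hline I using 1
    · funext s; rw [← update_add_mul_eq_add_smul_single]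
    · simp [hermInner_single_right]

/-- the x_k and y_k derivative identities on the hyperplane t = 0. -/
theorem xy_derivative_identities (n : ℕ) (hn : 1 ≤ n) (ν : ℝ) (hν : 0 < ν)
    (f : Heis n → ℝ) (hcont : Continuous f) (hpos : ∀ p, 0 < f p)
    (hmax : ∀ p, f p ≤ f 0)
    (α : ℝ) (hα : 0 < α)
    (hlim : Tendsto (fun ζ => korNorm ζ ^ ν * f ζ) (atInftyH n) (nhds α))
    (β : ℝ) (hβ : β = α ^ (2 / ν) * f 0 ^ (-(2 / ν)))
    (hsym : ∀ ξ : Heis n, ∃ lam : ℝ, 0 < lam ∧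
      ∀ ζ : Heis n, ζ ≠ ξ → (lam / dH ξ ζ) ^ ν * f (Phi ξ lam β ζ) = f ζ) :
    ∀ (k : Fin n) (z : Fin n → ℂ),
      HasDerivAt (fun s : ℝ => f (Function.update z k (z k + (s : ℂ)), 0))
        (-ν * α ^ (-(2 / ν)) * (z k).re * f (z, 0) ^ (1 + 2 / ν)) 0 ∧
      HasDerivAt (fun s : ℝ => f (Function.update z k (z k + (s : ℂ) * Complex.I), 0))
        (-ν * α ^ (-(2 / ν)) * (z k).im * f (z, 0) ^ (1 + 2 / ν)) 0 :=
  xy_derivative_identities_general n ν hν f hcont hpos hmax α hα hlim β hβ hsym
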